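/- Let e₁,…,e_{2n} be the standard basis of ℂ^{2n} with n ≥ 4, let w = e₁∧e₄ + e₂∧e₃ + e₅∧e₈ + e₆∧e₇ + Σ_{j=5}^{n} e_{2j−1}∧e_{2j} and v = a₁(e₁∧e₄ + e₂∧e₃) + a₂(e₅∧e₈ + e₆∧e₇) + e₂∧e₄ + e₆∧e₈ + Σ_{j=5}^{n} b_j · e_{2j−1}∧e_{2j} for arbitrary scalars a₁, a₂, b₅,…,b_n. Let φ = ⋀_{j ∉ {2,4,6,8}} e_j ∈ ⋀^{2n−4}ℂ^{2n} (wedge of the remaining basis vectors in increasing order). Then φ ∧ w = 0 but φ ∧ v ∧ v ≠ 0. In particular w does not divide v ∧ v. -/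

import Mathlib

/-!
Every term of `w`, and every term of `v` other than `e₂∧e₄ + e₆∧e₈`, contains a factor `eⱼ`
with `j ∉ {2, 4, 6, 8}`, which already occurs in `φ`; so `φ ∧ w = 0` and
`φ ∧ v = φ ∧ (e₂∧e₄ + e₆∧e₈)`. Since two-vectors commute,
`φ ∧ v ∧ v = 2 φ ∧ e₂∧e₄∧e₆∧e₈`, a wedge of all `2n` basis vectors, hence nonzero.
If `v ∧ v = w ∧ u`, then `φ ∧ v ∧ v = φ ∧ w ∧ u = 0`, a contradiction.
-/

open ExteriorAlgebra

/-- The image in the exterior algebra of the `i`-th standard basis vector of `ℂⁿ`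
(indices `0 ≤ i < n`; so `e₁` of the paper is `stdExt n 0`, etc.). -/
noncomputable def stdExt (n : ℕ) (i : ℕ) : ExteriorAlgebra ℂ (Fin n → ℂ) :=
  ι ℂ (fun t : Fin n => if (t : ℕ) = i then (1 : ℂ) else 0)

namespace ExteriorAlgebra

variable {R M N : Type*} [CommRing R] [AddCommGroup M] [Module R M] [AddCommGroup N] [Module R N]

theorem list_prod_map_ι_eq_ιMulti (l : List M) :
    (l.map (ι R)).prod = ιMulti R l.length (fun k => l[k]) := by
  rw [ιMulti_apply]
  exact congrArg List.prod (List.ofFn_getElem_eq_map l (ι R)).symm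

theorem list_prod_map_ι_eq_zero_of_not_nodup {l : List M} (hl : ¬l.Nodup) :
    (l.map (ι R)).prod = 0 :=
  (list_prod_map_ι_eq_ιMulti l).trans <|
    ιMulti_eq_zero_of_not_inj fun hinj => hl (List.nodup_iff_injective_get.mpr hinj)

theorem commute_ι_mul_ι_ι (x y z : M) : Commute (ι R x * ι R y) (ι R z) := by
  have hyz := eq_neg_of_add_eq_zero_left (ι_add_mul_swap (R := R) y z)
  have hxz := eq_neg_of_add_eq_zero_left (ι_add_mul_swap (R := R) x z)
  unfold Commute SemiconjBy
  rw [mul_assoc, hyz, mul_neg, ← mul_assoc, hxz, neg_mul, neg_neg, mul_assoc]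

theorem ιMulti_ne_zero_of_apply_ne_zero {k : ℕ} (f : M [⋀^Fin k]→ₗ[R] N) {v : Fin k → M}
    (hv : f v ≠ 0) : ιMulti R k v ≠ 0 := fun h => hv <| by
  rw [← exteriorPower.alternatingMapLinearEquiv_apply_ιMulti,
    show exteriorPower.ιMulti R k v = 0 from Subtype.ext h, map_zero]

variable {K E I : Type*} [Field K] [AddCommGroup E] [Module K E]

theorem ιMulti_ne_zero_of_linearIndependent {k : ℕ} {v : Fin k → E}
    (hv : LinearIndependent K v) : ιMulti K k v ≠ 0 := by
  set b := Module.Basis.span hv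
  have hb : ιMulti K k b ≠ 0 :=
    ιMulti_ne_zero_of_apply_ne_zero b.det (by rw [b.det_self]; exact one_ne_zero)
  have hmap : map (Submodule.subtype _) (ιMulti K k b) = ιMulti K k v := by
    rw [map_apply_ιMulti]
    congr 1
    ext i
    simp [b, Module.Basis.span_apply]
  rw [← hmap]
  exact (map_injective_field (Submodule.ker_subtype _)).ne_iff' (map_zero _) |>.mpr hb

theorem list_prod_map_ι_ne_zero {v : I → E} (hv : LinearIndependent K v) {l : List I}
    (hl : l.Nodup) : ((l.map v).map (ι K)).prod ≠ 0 := by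
  rw [list_prod_map_ι_eq_ιMulti]
  refine ιMulti_ne_zero_of_linearIndependent ?_
  convert hv.comp (l.get ∘ Fin.cast (List.length_map v))
    ((List.nodup_iff_injective_get.mp hl).comp (Fin.cast_injective _)) with k
  simp

end ExteriorAlgebra

noncomputable def stdWedge (m : ℕ) (l : List ℕ) : ExteriorAlgebra ℂ (Fin m → ℂ) :=
  (l.map (stdExt m)).prod

theorem stdExt_mul_stdExt_commute (m i j k p : ℕ) :
    Commute (stdExt m i * stdExt m j) (stdExt m k * stdExt m p) :=
  (commute_ι_mul_ι_ι _ _ _).mul_right (commute_ι_mul_ι_ι _ _ _)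

section stdWedge

variable {m : ℕ}

theorem stdWedge_append (l₁ l₂ : List ℕ) :
    stdWedge m (l₁ ++ l₂) = stdWedge m l₁ * stdWedge m l₂ := by
  simp [stdWedge]

theorem stdWedge_pair (i j : ℕ) : stdWedge m [i, j] = stdExt m i * stdExt m j := by
  simp [stdWedge]

theorem stdWedge_eq_zero_of_not_nodup {l : List ℕ} (hl : ¬l.Nodup) : stdWedge m l = 0 := by
  have h := list_prod_map_ι_eq_zero_of_not_nodup (R := ℂ)
    (l := l.map fun i (t : Fin m) => if (t : ℕ) = i then (1 : ℂ) else 0) fun h => hl (h.of_map _)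
  rwa [List.map_map] at h

theorem stdWedge_ne_zero {l : List ℕ} (hl : l.Nodup) (hlt : ∀ i ∈ l, i < m) :
    stdWedge m l ≠ 0 := by
  lift l to List (Fin m) using hlt
  have hstd : stdExt m ∘ Fin.val = ι ℂ ∘ Pi.basisFun ℂ (Fin m) := by
    ext i : 1
    simp only [Function.comp_apply, stdExt, Pi.basisFun_apply]
    congr 1
    ext t
    simp [Pi.single_apply, Fin.ext_iff]
  rw [stdWedge, List.map_map, hstd, ← List.map_map]
  exact list_prod_map_ι_ne_zero (Pi.basisFun ℂ _).linearIndependent (hl.of_map _)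

theorem stdWedge_mul_pair_eq_zero {l : List ℕ} {i j : ℕ} (h : i ∈ l ∨ j ∈ l) :
    stdWedge m l * (stdExt m i * stdExt m j) = 0 := by
  rw [← stdWedge_pair, ← stdWedge_append]
  refine stdWedge_eq_zero_of_not_nodup fun hnd => ?_
  rcases h with h | h <;> exact (List.nodup_append.mp hnd).2.2 _ h _ (by simp) rfl

theorem stdWedge_append_pair_self (l : List ℕ) (i j : ℕ) :
    stdWedge m (l ++ [i, j] ++ [i, j]) = 0 := by
  rw [stdWedge_append _ [i, j], stdWedge_pair]
  exact stdWedge_mul_pair_eq_zero (.inl (List.mem_append_right _ (List.mem_cons_self ..)))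

theorem stdWedge_append_pair_comm (l : List ℕ) (i j k p : ℕ) :
    stdWedge m (l ++ [i, j] ++ [k, p]) = stdWedge m (l ++ [k, p] ++ [i, j]) := by
  simp only [stdWedge_append, stdWedge_pair, mul_assoc, (stdExt_mul_stdExt_commute m i j k p).eq]

end stdWedge

namespace PartitionTwoTwo

noncomputable def w (n : ℕ) : ExteriorAlgebra ℂ (Fin (2 * n) → ℂ) :=
  letI E := stdExt (2 * n)
  E 0 * E 3 + E 1 * E 2 + E 4 * E 7 + E 5 * E 6 + ∑ j ∈ Finset.Ico 4 n, E (2 * j) * E (2 * j + 1)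

noncomputable def v (n : ℕ) (a₁ a₂ : ℂ) (b : ℕ → ℂ) : ExteriorAlgebra ℂ (Fin (2 * n) → ℂ) :=
  letI E := stdExt (2 * n)
  a₁ • (E 0 * E 3 + E 1 * E 2) + a₂ • (E 4 * E 7 + E 5 * E 6) +
    E 1 * E 3 + E 5 * E 7 + ∑ j ∈ Finset.Ico 4 n, b j • (E (2 * j) * E (2 * j + 1))

def phiSupport (n : ℕ) : List ℕ :=
  (List.range (2 * n)).filter (fun j => decide (j ∉ ([1, 3, 5, 7] : List ℕ)))

variable {n : ℕ}

theorem mem_phiSupport {i : ℕ} (hi : i < 2 * n) (hi' : i ∉ ([1, 3, 5, 7] : List ℕ)) :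
    i ∈ phiSupport n :=
  List.mem_filter.mpr ⟨List.mem_range.mpr hi, decide_eq_true hi'⟩

theorem stdWedge_mul_w (hn : 4 ≤ n) {l : List ℕ} (hl : phiSupport n ⊆ l) :
    stdWedge (2 * n) l * w n = 0 := by
  have kill i j (h : i ∈ phiSupport n ∨ j ∈ phiSupport n) :=
    stdWedge_mul_pair_eq_zero (m := 2 * n) (h.imp (hl ·) (hl ·))
  simp only [w, mul_add, Finset.mul_sum]
  rw [kill 0 3 (.inl (mem_phiSupport (by omega) (by decide))),
    kill 1 2 (.inr (mem_phiSupport (by omega) (by decide))),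
    kill 4 7 (.inl (mem_phiSupport (by omega) (by decide))),
    kill 5 6 (.inr (mem_phiSupport (by omega) (by decide))),
    Finset.sum_eq_zero fun j hj =>
      kill _ _ (.inl (mem_phiSupport (by simp at hj; omega) (by simp; omega)))]
  simp

theorem stdWedge_mul_v (hn : 4 ≤ n) (a₁ a₂ : ℂ) (b : ℕ → ℂ) {l : List ℕ}
    (hl : phiSupport n ⊆ l) :
    stdWedge (2 * n) l * v n a₁ a₂ b =
      stdWedge (2 * n) (l ++ [1, 3]) + stdWedge (2 * n) (l ++ [5, 7]) := by
  have kill i j (h : i ∈ phiSupport n ∨ j ∈ phiSupport n) :=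
    stdWedge_mul_pair_eq_zero (m := 2 * n) (h.imp (hl ·) (hl ·))
  simp only [v, mul_add, Finset.mul_sum, mul_smul_comm]
  rw [kill 0 3 (.inl (mem_phiSupport (by omega) (by decide))),
    kill 1 2 (.inr (mem_phiSupport (by omega) (by decide))),
    kill 4 7 (.inl (mem_phiSupport (by omega) (by decide))),
    kill 5 6 (.inr (mem_phiSupport (by omega) (by decide))),
    Finset.sum_eq_zero fun j hj => by
      rw [kill _ _ (.inl (mem_phiSupport (by simp at hj; omega) (by simp; omega))), smul_zero],
    stdWedge_append, stdWedge_append, stdWedge_pair, stdWedge_pair]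
  simp

theorem stdWedge_phiSupport_mul_v_mul_v (hn : 4 ≤ n) (a₁ a₂ : ℂ) (b : ℕ → ℂ) :
    stdWedge (2 * n) (phiSupport n) * (v n a₁ a₂ b * v n a₁ a₂ b) =
      (2 : ℂ) • stdWedge (2 * n) (phiSupport n ++ [1, 3, 5, 7]) := by
  have hsub (l : List ℕ) : phiSupport n ⊆ phiSupport n ++ l := List.subset_append_left _ _
  rw [← mul_assoc, stdWedge_mul_v hn _ _ _ (List.Subset.refl _), add_mul,
    stdWedge_mul_v hn _ _ _ (hsub _), stdWedge_mul_v hn _ _ _ (hsub _),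
    stdWedge_append_pair_self, stdWedge_append_pair_self, zero_add, add_zero, two_smul,
    stdWedge_append_pair_comm _ 5 7 1 3, List.append_assoc]
  rfl

theorem stdWedge_phiSupport_append_ne_zero (hn : 4 ≤ n) :
    stdWedge (2 * n) (phiSupport n ++ [1, 3, 5, 7]) ≠ 0 := by
  refine stdWedge_ne_zero ?_ fun i hi => ?_
  · refine List.nodup_append.mpr ⟨List.nodup_range.filter _, by decide, ?_⟩
    rintro i hi _ hi' rfl
    exact of_decide_eq_true (List.mem_filter.mp hi).2 hi'
  · rcases List.mem_append.mp hi with hi | hi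
    · exact List.mem_range.mp (List.mem_filter.mp hi).1
    · simp only [List.mem_cons, List.not_mem_nil, or_false] at hi
      omega

end PartitionTwoTwo

/-- Partition case `λ₁ = λ₂ = 2` in Lemma 5.8: with
`w = e₁∧e₄ + e₂∧e₃ + e₅∧e₈ + e₆∧e₇ + Σ_{j≥5} e_{2j−1}∧e_{2j}`,
`v = a₁(e₁∧e₄ + e₂∧e₃) + a₂(e₅∧e₈ + e₆∧e₇) + e₂∧e₄ + e₆∧e₈ + Σ_{j≥5} bⱼ e_{2j−1}∧e_{2j}` and
`φ = ⋀_{j∉{2,4,6,8}} eⱼ`, one has `φ ∧ w = 0` but `φ ∧ v ∧ v ≠ 0`; in particular `w` does not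
divide `v ∧ v`. -/
theorem partition_two_two_not_divisible
    (n : ℕ) (hn : 4 ≤ n) (a₁ a₂ : ℂ) (b : ℕ → ℂ) :
    letI E := stdExt (2 * n)
    letI w := E 0 * E 3 + E 1 * E 2 + E 4 * E 7 + E 5 * E 6 +
      ∑ j ∈ Finset.Ico 4 n, E (2 * j) * E (2 * j + 1)
    letI v := a₁ • (E 0 * E 3 + E 1 * E 2) + a₂ • (E 4 * E 7 + E 5 * E 6) +
      E 1 * E 3 + E 5 * E 7 + ∑ j ∈ Finset.Ico 4 n, b j • (E (2 * j) * E (2 * j + 1))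
    letI φ := (((List.range (2 * n)).filter
      (fun j => decide (j ∉ ([1, 3, 5, 7] : List ℕ)))).map E).prod
    φ * w = 0 ∧ φ * (v * v) ≠ 0 ∧
      ¬∃ u : ExteriorAlgebra ℂ (Fin (2 * n) → ℂ), v * v = w * u := by
  have hφw : stdWedge (2 * n) (PartitionTwoTwo.phiSupport n) * PartitionTwoTwo.w n = 0 :=
    PartitionTwoTwo.stdWedge_mul_w hn (List.Subset.refl _)
  have hφvv : stdWedge (2 * n) (PartitionTwoTwo.phiSupport n) *
      (PartitionTwoTwo.v n a₁ a₂ b * PartitionTwoTwo.v n a₁ a₂ b) ≠ 0 := by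
    rw [PartitionTwoTwo.stdWedge_phiSupport_mul_v_mul_v hn]
    exact smul_ne_zero two_ne_zero (PartitionTwoTwo.stdWedge_phiSupport_append_ne_zero hn)
  exact ⟨hφw, hφvv, fun hdvd => hφvv (zero_dvd_iff.mp (hφw ▸ mul_dvd_mul_left _ hdvd))⟩
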